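/- Let S be a 1-synchronizable system, τ ∈ Tr₀(S), and messages m₁,…,m_n such that τ·!m₁⋯!m_n ∈ Tr_n(S). Then τ·!?m₁·!?m₂⋯!?m_n ∈ Tr₀(S). -/

import Mathlib

/-! Communicating finite state machines: messages, traces, systems. -/

structure MessageSet where
  msgs : Finset ℕ
  p : ℕ
  src : ℕ → ℕ
  dst : ℕ → ℕ

def MessageSet.WF (M : MessageSet) : Prop :=
  1 ≤ M.p ∧ ∀ a ∈ M.msgs, M.src a ≠ M.dst a ∧ M.src a < M.p ∧ M.dst a < M.p

inductive Act where
  | send (a : ℕ)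
  | recv (a : ℕ)
deriving DecidableEq

abbrev Trace := List Act

def Act.msg : Act → ℕ
  | .send a => a
  | .recv a => a

def peerOf (M : MessageSet) : Act → ℕ
  | .send a => M.src a
  | .recv a => M.dst a

/-- Send projection: the sequence of messages sent in a trace. -/
def sendProj (τ : Trace) : List ℕ :=
  τ.filterMap (fun α => match α with | .send a => some a | .recv _ => none)

/-- Projection of a trace on the actions of peer `i`. -/
def projPeer (M : MessageSet) (i : ℕ) (τ : Trace) : Trace :=
  τ.filter (fun α => peerOf M α = i)

def sentOn (M : MessageSet) (i j : ℕ) (τ : Trace) : List ℕ :=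
  τ.filterMap (fun α => match α with
    | .send a => if M.src a = i ∧ M.dst a = j then some a else none
    | .recv _ => none)

def recvOn (M : MessageSet) (i j : ℕ) (τ : Trace) : List ℕ :=
  τ.filterMap (fun α => match α with
    | .recv a => if M.src a = i ∧ M.dst a = j then some a else none
    | .send _ => none)

/-- A trace is FIFO if on every channel, in every prefix, the receives form a
prefix of the sends. -/
def Fifo (M : MessageSet) (τ : Trace) : Prop :=
  ∀ τ', τ' <+: τ → ∀ i j, recvOn M i j τ' <+: sentOn M i j τ'

/-- `k`-bounded FIFO trace: the buffer of each channel never exceeds `k`. -/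
def BoundedFifo (M : MessageSet) (k : ℕ) (τ : Trace) : Prop :=
  Fifo M τ ∧ ∀ τ', τ' <+: τ → ∀ i j,
    (sentOn M i j τ').length ≤ (recvOn M i j τ').length + k

/-- `!?a₁ ⬝ !?a₂ ⋯ !?aₙ` -/
def syncOf (l : List ℕ) : Trace := l.flatMap (fun a => [Act.send a, Act.recv a])

def Synchronous (τ : Trace) : Prop := ∃ l : List ℕ, τ = syncOf l

def CausalEquiv (M : MessageSet) (τ₁ τ₂ : Trace) : Prop :=
  Fifo M τ₁ ∧ Fifo M τ₂ ∧ ∀ i, projPeer M i τ₁ = projPeer M i τ₂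

/-- A system of communicating machines: for each peer `i`, an initial state and
a transition relation (all states are accepting). -/
structure System where
  init : ℕ → ℕ
  delta : ℕ → ℕ → Act → ℕ → Prop

/-- Well-formedness: peer `i` performs only actions of peer `i`, on messages of `M`. -/
def System.WF (S : System) (M : MessageSet) : Prop :=
  ∀ i q α q', S.delta i q α q' → peerOf M α = i ∧ α.msg ∈ M.msgs

/-- The machines are finite-state. -/
def System.FiniteDelta (S : System) : Prop :=
  Set.Finite {x : ℕ × ℕ × Act × ℕ | S.delta x.1 x.2.1 x.2.2.1 x.2.2.2}

/-- A configuration: local states, and one FIFO buffer per channel `(i,j)`. -/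
abbrev Config := (ℕ → ℕ) × (ℕ → ℕ → List ℕ)

def Stable (c : Config) : Prop := ∀ i j, c.2 i j = []

def Step (M : MessageSet) (S : System) (c : Config) : Act → Config → Prop
  | .send a, c' =>
      S.delta (M.src a) (c.1 (M.src a)) (.send a) (c'.1 (M.src a)) ∧
      (∀ k, k ≠ M.src a → c'.1 k = c.1 k) ∧
      c'.2 (M.src a) (M.dst a) = c.2 (M.src a) (M.dst a) ++ [a] ∧
      (∀ k l, ¬(k = M.src a ∧ l = M.dst a) → c'.2 k l = c.2 k l)
  | .recv a, c' =>
      S.delta (M.dst a) (c.1 (M.dst a)) (.recv a) (c'.1 (M.dst a)) ∧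
      (∀ k, k ≠ M.dst a → c'.1 k = c.1 k) ∧
      c.2 (M.src a) (M.dst a) = a :: c'.2 (M.src a) (M.dst a) ∧
      (∀ k l, ¬(k = M.src a ∧ l = M.dst a) → c'.2 k l = c.2 k l)

inductive Exec (M : MessageSet) (S : System) : Config → Trace → Config → Prop
  | refl (c : Config) : Exec M S c [] c
  | step {c c' c'' : Config} {α : Act} {τ : Trace} :
      Step M S c α c' → Exec M S c' τ c'' → Exec M S c (α :: τ) c''

def initConfig (S : System) : Config := (S.init, fun _ _ => [])

def TraceOf (M : MessageSet) (S : System) (τ : Trace) : Prop :=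
  ∃ c, Exec M S (initConfig S) τ c

/-- `Trk M S 0` = synchronous traces; `Trk M S k` (`k ≥ 1`) = `k`-bounded traces. -/
def Trk (M : MessageSet) (S : System) : ℕ → Trace → Prop
  | 0, τ => TraceOf M S τ ∧ Synchronous τ
  | (k+1), τ => TraceOf M S τ ∧ BoundedFifo M (k+1) τ

def Trω (M : MessageSet) (S : System) (τ : Trace) : Prop := ∃ k, Trk M S k τ

/-- Two traces are `S`-equivalent if they lead from the initial configuration to
a common configuration. -/
def SEquiv (M : MessageSet) (S : System) (τ₁ τ₂ : Trace) : Prop :=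
  ∃ c, Exec M S (initConfig S) τ₁ c ∧ Exec M S (initConfig S) τ₂ c

/-- Send-trace language. -/
def STw (M : MessageSet) (S : System) (T : Trace → Prop) : Set (List ℕ) :=
  {w | ∃ τ, T τ ∧ sendProj τ = w}

/-- Send traces enriched with the reached stable configurations. -/
def STc (M : MessageSet) (S : System) (T : Trace → Prop) :
    Set (List ℕ ⊕ List ℕ × Config) :=
  {x | (∃ τ, T τ ∧ x = Sum.inl (sendProj τ)) ∨
       (∃ τ c, T τ ∧ Exec M S (initConfig S) τ c ∧ Stable c ∧
          x = Sum.inr (sendProj τ, c))}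

def kSync (M : MessageSet) (S : System) (k : ℕ) : Prop :=
  STc M S (Trk M S 0) = STc M S (Trk M S k)

def Synchronizable (M : MessageSet) (S : System) : Prop :=
  STc M S (Trk M S 0) = STc M S (Trω M S)

def LangSync (M : MessageSet) (S : System) : Prop :=
  STw M S (Trk M S 0) = STw M S (Trω M S)

inductive Shuffle : List Act → List Act → List Act → Prop
  | nil : Shuffle [] [] []
  | left {u v w : List Act} (a : Act) : Shuffle u v w → Shuffle (a :: u) v (a :: w)
  | right {u v w : List Act} (b : Act) : Shuffle u v w → Shuffle u (b :: v) (b :: w)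

inductive NShuffle : List ℕ → List ℕ → List ℕ → Prop
  | nil : NShuffle [] [] []
  | left {u v w : List ℕ} (a : ℕ) : NShuffle u v w → NShuffle (a :: u) v (a :: w)
  | right {u v w : List ℕ} (b : ℕ) : NShuffle u v w → NShuffle u (b :: v) (b :: w)

inductive PPath (S : System) (i : ℕ) : ℕ → Trace → Prop
  | nil (q : ℕ) : PPath S i q []
  | cons {q q' : ℕ} {α : Act} {w : Trace} :
      S.delta i q α q' → PPath S i q' w → PPath S i q (α :: w)

/-- The language of peer `i` (all states accepting). -/
def Lang (S : System) (i : ℕ) : Set Trace := {w | PPath S i (S.init i) w}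

def prefCl (L : Set Trace) : Set Trace := {w | ∃ v ∈ L, w <+: v}

def OrientedRing (M : MessageSet) : Prop :=
  1 ≤ M.p ∧ ∀ i j, (∃ a ∈ M.msgs, M.src a = i ∧ M.dst a = j) ↔
    (i < M.p ∧ j = (i + 1) % M.p)

/-! ### Auxiliary lemmas -/

section Aux

variable {M : MessageSet} {S : System}

lemma syncOf_nil : syncOf [] = [] := rfl

lemma syncOf_cons (a : ℕ) (w : List ℕ) :
    syncOf (a :: w) = Act.send a :: Act.recv a :: syncOf w := rfl

lemma syncOf_append (u v : List ℕ) : syncOf (u ++ v) = syncOf u ++ syncOf v :=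
  List.flatMap_append

lemma sendProj_nil : sendProj [] = [] := rfl

lemma sendProj_append (σ σ' : Trace) :
    sendProj (σ ++ σ') = sendProj σ ++ sendProj σ' :=
  List.filterMap_append

lemma sendProj_syncOf (w : List ℕ) : sendProj (syncOf w) = w := by
  induction w with
  | nil => rfl
  | cons a w ih => simp [syncOf_cons, sendProj, List.filterMap_cons] at ih ⊢; exact ih

lemma projPeer_nil (i : ℕ) : projPeer M i [] = [] := rfl

lemma projPeer_cons (i : ℕ) (α : Act) (σ : Trace) :
    projPeer M i (α :: σ) =
      if peerOf M α = i then α :: projPeer M i σ else projPeer M i σ := by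
  simp [projPeer, List.filter_cons]

lemma projPeer_append (i : ℕ) (σ σ' : Trace) :
    projPeer M i (σ ++ σ') = projPeer M i σ ++ projPeer M i σ' :=
  List.filter_append σ σ'

lemma sentOn_nil (i j : ℕ) : sentOn M i j [] = [] := rfl

lemma recvOn_nil (i j : ℕ) : recvOn M i j [] = [] := rfl

lemma sentOn_append (i j : ℕ) (σ σ' : Trace) :
    sentOn M i j (σ ++ σ') = sentOn M i j σ ++ sentOn M i j σ' :=
  List.filterMap_append

lemma recvOn_append (i j : ℕ) (σ σ' : Trace) :
    recvOn M i j (σ ++ σ') = recvOn M i j σ ++ recvOn M i j σ' :=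
  List.filterMap_append

lemma sentOn_send (i j a : ℕ) :
    sentOn M i j [Act.send a] = if M.src a = i ∧ M.dst a = j then [a] else [] := by
  by_cases h : M.src a = i ∧ M.dst a = j <;> simp [sentOn, List.filterMap_cons, h]

lemma sentOn_recv (i j a : ℕ) : sentOn M i j [Act.recv a] = [] := by
  simp [sentOn, List.filterMap_cons]

lemma recvOn_recv (i j a : ℕ) :
    recvOn M i j [Act.recv a] = if M.src a = i ∧ M.dst a = j then [a] else [] := by
  by_cases h : M.src a = i ∧ M.dst a = j <;> simp [recvOn, List.filterMap_cons, h]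

lemma recvOn_send (i j a : ℕ) : recvOn M i j [Act.send a] = [] := by
  simp [recvOn, List.filterMap_cons]

lemma sentOn_syncOf (i j : ℕ) (w : List ℕ) :
    sentOn M i j (syncOf w) = w.filter (fun a => decide (M.src a = i ∧ M.dst a = j)) := by
  induction w with
  | nil => rfl
  | cons a w ih =>
    show sentOn M i j ([Act.send a, Act.recv a] ++ syncOf w) = _
    rw [sentOn_append, List.filter_cons]
    show sentOn M i j ([Act.send a] ++ [Act.recv a]) ++ _ = _
    rw [sentOn_append, sentOn_send, sentOn_recv, ih]
    by_cases h : M.src a = i ∧ M.dst a = j <;> simp [h]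

lemma recvOn_syncOf (i j : ℕ) (w : List ℕ) :
    recvOn M i j (syncOf w) = w.filter (fun a => decide (M.src a = i ∧ M.dst a = j)) := by
  induction w with
  | nil => rfl
  | cons a w ih =>
    show recvOn M i j ([Act.send a, Act.recv a] ++ syncOf w) = _
    rw [recvOn_append, List.filter_cons]
    show recvOn M i j ([Act.send a] ++ [Act.recv a]) ++ _ = _
    rw [recvOn_append, recvOn_send, recvOn_recv, ih]
    by_cases h : M.src a = i ∧ M.dst a = j <;> simp [h]

lemma recvOn_syncOf_eq_sentOn (i j : ℕ) (w : List ℕ) :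
    recvOn M i j (syncOf w) = sentOn M i j (syncOf w) := by
  rw [recvOn_syncOf, sentOn_syncOf]

end Aux

section Aux2

variable {M : MessageSet} {S : System}

lemma PPath.prefix {i q : ℕ} {w w' : Trace} (h : PPath S i q (w ++ w')) :
    PPath S i q w := by
  induction w generalizing q with
  | nil => exact PPath.nil q
  | cons α w ih =>
    cases h with
    | cons hd hp => exact PPath.cons hd (ih hp)

lemma PPath.of_prefix {i q : ℕ} {w w' : Trace} (h : PPath S i q w') (hpre : w <+: w') :
    PPath S i q w := by
  obtain ⟨t, rfl⟩ := hpre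
  exact h.prefix

/-- Each peer's projection of an execution is a local path. -/
lemma ppath_of_exec {c c' : Config} {σ : Trace} (he : Exec M S c σ c') (i : ℕ) :
    PPath S i (c.1 i) (projPeer M i σ) := by
  induction he with
  | refl c => exact PPath.nil _
  | @step c c' c'' α σ hstep hexec ih =>
    cases α with
    | send a =>
      obtain ⟨hd, hoth, _, _⟩ := hstep
      rw [projPeer_cons]
      by_cases hi : peerOf M (Act.send a) = i
      · rw [if_pos hi]
        have hsrc : M.src a = i := hi
        subst hsrc
        exact PPath.cons hd ih
      · rw [if_neg hi]
        have : c'.1 i = c.1 i := hoth i (fun hh => hi hh.symm)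
        rwa [this] at ih
    | recv a =>
      obtain ⟨hd, hoth, _, _⟩ := hstep
      rw [projPeer_cons]
      by_cases hi : peerOf M (Act.recv a) = i
      · rw [if_pos hi]
        have hdst : M.dst a = i := hi
        subst hdst
        exact PPath.cons hd ih
      · rw [if_neg hi]
        have : c'.1 i = c.1 i := hoth i (fun hh => hi hh.symm)
        rwa [this] at ih

/-- Channel coherence of a trace relative to current buffer contents. -/
def ChanOK (M : MessageSet) (buf : List ℕ) (i j : ℕ) (σ : Trace) : Prop :=
  ∀ σ', σ' <+: σ → recvOn M i j σ' <+: buf ++ sentOn M i j σ'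

/-- Mixing lemma: a trace exists as soon as each peer's projection is a local
path and channels are coherent. -/
lemma exec_of_paths :
    ∀ (σ : Trace) (c : Config),
      (∀ i, PPath S i (c.1 i) (projPeer M i σ)) →
      (∀ i j, ChanOK M (c.2 i j) i j σ) →
      ∃ c', Exec M S c σ c' := by
  intro σ
  induction σ with
  | nil => intro c _ _; exact ⟨c, Exec.refl c⟩
  | cons α σ ih =>
    intro c hpaths hchan
    cases α with
    | send a =>
      have hp := hpaths (M.src a)
      rw [projPeer_cons, if_pos (show peerOf M (Act.send a) = M.src a from rfl)] at hp
      cases hp with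
      | @cons _ q' _ _ hd hp =>
        set c' : Config :=
          (Function.update c.1 (M.src a) q',
            fun k l => if k = M.src a ∧ l = M.dst a then c.2 k l ++ [a] else c.2 k l)
          with hc'
        have hstep : Step M S c (Act.send a) c' := by
          refine ⟨?_, ?_, ?_, ?_⟩
          · simpa [hc', Function.update_self] using hd
          · intro k hk; simp [hc', Function.update_of_ne hk]
          · simp [hc']
          · intro k l hkl; simp [hc', if_neg hkl]
        have hpaths' : ∀ i, PPath S i (c'.1 i) (projPeer M i σ) := by
          intro i
          by_cases hi : i = M.src a
          · subst hi; simpa [hc', Function.update_self] using hp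
          · have hne : peerOf M (Act.send a) ≠ i := fun hh => hi (hh.symm)
            have := hpaths i
            rw [projPeer_cons, if_neg hne] at this
            simpa [hc', Function.update_of_ne hi] using this
        have hchan' : ∀ i j, ChanOK M (c'.2 i j) i j σ := by
          intro i j σ'' hpre
          have := hchan i j (Act.send a :: σ'') (by exact List.cons_prefix_cons.mpr ⟨rfl, hpre⟩)
          by_cases hij : i = M.src a ∧ j = M.dst a
          · obtain ⟨hi, hj⟩ := hij
            have hs : sentOn M i j (Act.send a :: σ'') = a :: sentOn M i j σ'' := by
              show sentOn M i j ([Act.send a] ++ σ'') = _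
              rw [sentOn_append, sentOn_send, if_pos ⟨hi.symm, hj.symm⟩]; rfl
            have hr : recvOn M i j (Act.send a :: σ'') = recvOn M i j σ'' := by
              show recvOn M i j ([Act.send a] ++ σ'') = _
              rw [recvOn_append, recvOn_send]; rfl
            rw [hs, hr] at this
            have hbufeq : c'.2 i j = c.2 i j ++ [a] := by
              simp [hc', if_pos (⟨hi, hj⟩ : i = M.src a ∧ j = M.dst a)]
            rw [hbufeq, List.append_assoc]
            simpa using this
          · have hs : sentOn M i j (Act.send a :: σ'') = sentOn M i j σ'' := by
              show sentOn M i j ([Act.send a] ++ σ'') = _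
              rw [sentOn_append, sentOn_send, if_neg (by rintro ⟨h1, h2⟩; exact hij ⟨h1.symm, h2.symm⟩)]
              rfl
            have hr : recvOn M i j (Act.send a :: σ'') = recvOn M i j σ'' := by
              show recvOn M i j ([Act.send a] ++ σ'') = _
              rw [recvOn_append, recvOn_send]; rfl
            rw [hs, hr] at this
            simpa [hc', if_neg hij] using this
        obtain ⟨c'', he⟩ := ih c' hpaths' hchan'
        exact ⟨c'', Exec.step hstep he⟩
    | recv a =>
      have hp := hpaths (M.dst a)
      rw [projPeer_cons, if_pos (show peerOf M (Act.recv a) = M.dst a from rfl)] at hp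
      cases hp with
      | @cons _ q' _ _ hd hp =>
        -- the buffer on channel (src a, dst a) must start with a
        have hbuf := hchan (M.src a) (M.dst a) [Act.recv a]
          ⟨σ, rfl⟩
        rw [recvOn_recv, if_pos ⟨rfl, rfl⟩, sentOn_recv, List.append_nil] at hbuf
        obtain ⟨rest, hrest⟩ := hbuf
        set c' : Config :=
          (Function.update c.1 (M.dst a) q',
            fun k l => if k = M.src a ∧ l = M.dst a then rest else c.2 k l)
          with hc'
        have hstep : Step M S c (Act.recv a) c' := by
          refine ⟨?_, ?_, ?_, ?_⟩
          · simpa [hc', Function.update_self] using hd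
          · intro k hk; simp [hc', Function.update_of_ne hk]
          · simp [hc', ← hrest]
          · intro k l hkl; simp [hc', if_neg hkl]
        have hpaths' : ∀ i, PPath S i (c'.1 i) (projPeer M i σ) := by
          intro i
          by_cases hi : i = M.dst a
          · subst hi; simpa [hc', Function.update_self] using hp
          · have hne : peerOf M (Act.recv a) ≠ i := fun hh => hi (hh.symm)
            have := hpaths i
            rw [projPeer_cons, if_neg hne] at this
            simpa [hc', Function.update_of_ne hi] using this
        have hchan' : ∀ i j, ChanOK M (c'.2 i j) i j σ := by
          intro i j σ'' hpre
          have := hchan i j (Act.recv a :: σ'') (List.cons_prefix_cons.mpr ⟨rfl, hpre⟩)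
          by_cases hij : i = M.src a ∧ j = M.dst a
          · obtain ⟨hi, hj⟩ := hij
            have hs : sentOn M i j (Act.recv a :: σ'') = sentOn M i j σ'' := by
              show sentOn M i j ([Act.recv a] ++ σ'') = _
              rw [sentOn_append, sentOn_recv]; rfl
            have hr : recvOn M i j (Act.recv a :: σ'') = a :: recvOn M i j σ'' := by
              show recvOn M i j ([Act.recv a] ++ σ'') = _
              rw [recvOn_append, recvOn_recv, if_pos ⟨hi.symm, hj.symm⟩]; rfl
            have hceq : c.2 i j = a :: rest := by rw [hi, hj, ← hrest]; rfl
            rw [hs, hr, hceq] at this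
            have h2 : recvOn M i j σ'' <+: rest ++ sentOn M i j σ'' := by
              rcases this with ⟨t, ht⟩
              exact ⟨t, by simpa using ht⟩
            have hbufeq : c'.2 i j = rest := by
              simp [hc', if_pos (⟨hi, hj⟩ : i = M.src a ∧ j = M.dst a)]
            rw [hbufeq]
            exact h2
          · have hs : sentOn M i j (Act.recv a :: σ'') = sentOn M i j σ'' := by
              show sentOn M i j ([Act.recv a] ++ σ'') = _
              rw [sentOn_append, sentOn_recv]; rfl
            have hr : recvOn M i j (Act.recv a :: σ'') = recvOn M i j σ'' := by
              show recvOn M i j ([Act.recv a] ++ σ'') = _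
              rw [recvOn_append, recvOn_recv, if_neg (by rintro ⟨h1, h2⟩; exact hij ⟨h1.symm, h2.symm⟩)]
              rfl
            rw [hs, hr] at this
            simpa [hc', if_neg hij] using this
        obtain ⟨c'', he⟩ := ih c' hpaths' hchan'
        exact ⟨c'', Exec.step hstep he⟩

lemma traceOf_of_paths {σ : Trace} (hf : Fifo M σ)
    (hp : ∀ i, PPath S i (S.init i) (projPeer M i σ)) : TraceOf M S σ := by
  apply exec_of_paths σ (initConfig S) hp
  intro i j σ' hpre
  simpa [initConfig] using hf σ' hpre i j

lemma paths_of_traceOf {σ : Trace} (ht : TraceOf M S σ) (i : ℕ) :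
    PPath S i (S.init i) (projPeer M i σ) := by
  obtain ⟨c, he⟩ := ht
  exact ppath_of_exec he i

end Aux2

section Aux3

variable {M : MessageSet} {S : System}

/-- Classification of prefixes of `syncOf w ++ t`. -/
lemma prefix_syncOf_append :
    ∀ (w : List ℕ) {t τ' : Trace}, τ' <+: syncOf w ++ t →
      (∃ u₁ a, (τ' = syncOf u₁ ∨ τ' = syncOf u₁ ++ [Act.send a]) ∧ ∃ u₂, w = u₁ ++ a :: u₂) ∨
      (∃ t', t' <+: t ∧ τ' = syncOf w ++ t') := by
  intro w
  induction w with
  | nil =>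
    intro t τ' h
    right
    exact ⟨τ', by simpa [syncOf_nil] using h, by simp [syncOf_nil]⟩
  | cons a w ih =>
    intro t τ' h
    have hshape : syncOf (a :: w) ++ t = Act.send a :: (Act.recv a :: (syncOf w ++ t)) := by
      rw [syncOf_cons]; rfl
    rw [hshape] at h
    cases τ' with
    | nil => exact Or.inl ⟨[], a, Or.inl rfl, w, rfl⟩
    | cons β τ₂ =>
      obtain ⟨rfl, h2⟩ := List.cons_prefix_cons.mp h
      cases τ₂ with
      | nil => exact Or.inl ⟨[], a, Or.inr (by simp [syncOf_nil]), w, rfl⟩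
      | cons γ τ₃ =>
        obtain ⟨rfl, h3⟩ := List.cons_prefix_cons.mp h2
        rcases ih h3 with ⟨u₁, b, hor, u₂, rfl⟩ | ⟨t', hp, rfl⟩
        · left
          refine ⟨a :: u₁, b, ?_, u₂, rfl⟩
          rcases hor with h4 | h4
          · exact Or.inl (by rw [syncOf_cons, h4])
          · exact Or.inr (by rw [syncOf_cons, h4]; rfl)
        · right
          exact ⟨t', hp, by rw [syncOf_cons]; rfl⟩

/-- A generic criterion for `1`-bounded FIFO traces of shape `syncOf u ++ t`. -/
lemma shape_all (u : List ℕ) (t : Trace)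
    (ht : ∀ t', t' <+: t → ∀ i j,
      recvOn M i j t' <+: sentOn M i j t' ∧
      (sentOn M i j t').length ≤ (recvOn M i j t').length + 1) :
    ∀ τ', τ' <+: syncOf u ++ t → ∀ i j,
      recvOn M i j τ' <+: sentOn M i j τ' ∧
      (sentOn M i j τ').length ≤ (recvOn M i j τ').length + 1 := by
  intro τ' hpre i j
  rcases prefix_syncOf_append u hpre with ⟨u₁, a, hor, u₂, rfl⟩ | ⟨t', hp, rfl⟩
  · rcases hor with rfl | rfl
    · rw [recvOn_syncOf_eq_sentOn]
      exact ⟨List.prefix_refl _, by omega⟩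
    · rw [recvOn_append, sentOn_append, recvOn_send, recvOn_syncOf_eq_sentOn,
        List.append_nil, sentOn_send]
      constructor
      · exact List.prefix_append _ _
      · rw [List.length_append]
        split <;> simp
  · have h2 := ht t' hp i j
    rw [recvOn_append, sentOn_append, recvOn_syncOf_eq_sentOn]
    constructor
    · exact (List.prefix_append_right_inj _).mpr h2.1
    · rw [List.length_append, List.length_append]
      omega

lemma boundedFifo_of_shape (u : List ℕ) (t : Trace)
    (ht : ∀ t', t' <+: t → ∀ i j,
      recvOn M i j t' <+: sentOn M i j t' ∧
      (sentOn M i j t').length ≤ (recvOn M i j t').length + 1) :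
    BoundedFifo M 1 (syncOf u ++ t) :=
  ⟨fun τ' h i j => (shape_all u t ht τ' h i j).1,
   fun τ' h i j => (shape_all u t ht τ' h i j).2⟩

/-- Core computation for tails of the form `!z · syncOf v₁ · L`. -/
lemma tail_piece (z : ℕ) (v₁ : List ℕ) (L : Trace) (i j : ℕ)
    (hv : M.src z = i ∧ M.dst z = j →
      v₁.filter (fun b => decide (M.src b = i ∧ M.dst b = j)) = [])
    (hrecvL : recvOn M i j L = [])
    (hsentL : (sentOn M i j L).length ≤ 1)
    (hLz : M.src z = i ∧ M.dst z = j → sentOn M i j L = []) :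
    recvOn M i j (Act.send z :: (syncOf v₁ ++ L)) <+:
      sentOn M i j (Act.send z :: (syncOf v₁ ++ L)) ∧
    (sentOn M i j (Act.send z :: (syncOf v₁ ++ L))).length ≤
      (recvOn M i j (Act.send z :: (syncOf v₁ ++ L))).length + 1 := by
  have hr : recvOn M i j (Act.send z :: (syncOf v₁ ++ L)) =
      v₁.filter (fun b => decide (M.src b = i ∧ M.dst b = j)) := by
    show recvOn M i j ([Act.send z] ++ (syncOf v₁ ++ L)) = _
    rw [recvOn_append, recvOn_append, recvOn_send, recvOn_syncOf, hrecvL]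
    simp
  have hs : sentOn M i j (Act.send z :: (syncOf v₁ ++ L)) =
      (if M.src z = i ∧ M.dst z = j then [z] else []) ++
        (v₁.filter (fun b => decide (M.src b = i ∧ M.dst b = j)) ++ sentOn M i j L) := by
    show sentOn M i j ([Act.send z] ++ (syncOf v₁ ++ L)) = _
    rw [sentOn_append, sentOn_append, sentOn_send, sentOn_syncOf]
  rw [hr, hs]
  by_cases hz : M.src z = i ∧ M.dst z = j
  · rw [if_pos hz, hv hz, hLz hz]
    simp
  · rw [if_neg hz, List.nil_append]
    exact ⟨List.prefix_append _ _, by rw [List.length_append]; omega⟩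

/-- Tail of shape `[!z]` is 1-bounded-good. -/
lemma tail1_ok (z : ℕ) :
    ∀ t', t' <+: [Act.send z] → ∀ i j,
      recvOn M i j t' <+: sentOn M i j t' ∧
      (sentOn M i j t').length ≤ (recvOn M i j t').length + 1 := by
  intro t' hpre i j
  cases t' with
  | nil => simp [recvOn_nil, sentOn_nil]
  | cons β t'' =>
    obtain ⟨rfl, h2⟩ := List.cons_prefix_cons.mp hpre
    have : t'' = [] := List.prefix_nil.mp h2
    subst this
    rw [recvOn_send, sentOn_send]
    constructor
    · exact List.nil_prefix
    · split <;> simp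

/-- Tail of shape `!z · syncOf v · [!c]` is 1-bounded-good provided neither `v`
nor `c` uses the channel of `z`. -/
lemma tail2_ok (z c : ℕ) (v : List ℕ)
    (hv : ∀ b ∈ v, ¬(M.src b = M.src z ∧ M.dst b = M.dst z))
    (hc : ¬(M.src c = M.src z ∧ M.dst c = M.dst z)) :
    ∀ t', t' <+: Act.send z :: (syncOf v ++ [Act.send c]) → ∀ i j,
      recvOn M i j t' <+: sentOn M i j t' ∧
      (sentOn M i j t').length ≤ (recvOn M i j t').length + 1 := by
  intro t' hpre i j
  have hfilter : ∀ (v₁ : List ℕ), (∀ b ∈ v₁, b ∈ v) → M.src z = i ∧ M.dst z = j →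
      v₁.filter (fun b => decide (M.src b = i ∧ M.dst b = j)) = [] := by
    intro v₁ hsub hz
    rw [List.filter_eq_nil_iff]
    intro b hb
    simp only [decide_eq_true_eq]
    intro hbij
    exact hv b (hsub b hb) ⟨hbij.1.trans hz.1.symm, hbij.2.trans hz.2.symm⟩
  cases t' with
  | nil => simp [recvOn_nil, sentOn_nil]
  | cons β t'' =>
    obtain ⟨rfl, h2⟩ := List.cons_prefix_cons.mp hpre
    rcases prefix_syncOf_append v h2 with ⟨v₁, a, hor, v₂, rfl⟩ | ⟨t₃, hp, rfl⟩
    · have hsubv₁ : ∀ b ∈ v₁, b ∈ v₁ ++ a :: v₂ := fun b hb => List.mem_append_left _ hb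
      rcases hor with rfl | rfl
      · have := tail_piece (M := M) z v₁ [] i j (hfilter v₁ hsubv₁) rfl (by simp [sentOn_nil])
          (fun _ => rfl)
        simpa using this
      · refine tail_piece (M := M) z v₁ [Act.send a] i j (hfilter v₁ hsubv₁) (recvOn_send i j a) ?_ ?_
        · rw [sentOn_send]; split <;> simp
        · intro hz
          rw [sentOn_send, if_neg]
          rintro ⟨h1', h2'⟩
          exact hv a (List.mem_append_right _ List.mem_cons_self)
            ⟨h1'.trans hz.1.symm, h2'.trans hz.2.symm⟩
    · rcases List.prefix_cons_iff.mp hp with rfl | ⟨t₄, rfl, hpc⟩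
      · have := tail_piece (M := M) z v [] i j (hfilter v (fun b hb => hb)) rfl
          (by simp [sentOn_nil]) (fun _ => rfl)
        simpa using this
      · have : t₄ = [] := List.prefix_nil.mp hpc
        subst this
        refine tail_piece (M := M) z v [Act.send c] i j (hfilter v (fun b hb => hb))
          (recvOn_send i j c) ?_ ?_
        · rw [sentOn_send]; split <;> simp
        · intro hz
          rw [sentOn_send, if_neg]
          rintro ⟨h1', h2'⟩
          exact hc ⟨h1'.trans hz.1.symm, h2'.trans hz.2.symm⟩

end Aux3

section Aux4

variable {M : MessageSet} {S : System}

lemma trk_traceOf {k : ℕ} {σ : Trace} (h : Trk M S k σ) : TraceOf M S σ := by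
  cases k with
  | zero => exact h.1
  | succ k => exact h.1

/-- The crucial use of 1-synchronizability: every 1-bounded trace has a
synchronous counterpart with the same send trace, and synchronous traces are
determined by their send projections. -/
lemma sync_of_tr1 (hsync : kSync M S 1) {ξ : Trace} (h1 : Trk M S 1 ξ) :
    Trk M S 0 (syncOf (sendProj ξ)) := by
  have hin : (Sum.inl (sendProj ξ) : List ℕ ⊕ List ℕ × Config) ∈ STc M S (Trk M S 1) :=
    Or.inl ⟨ξ, h1, rfl⟩
  rw [← hsync] at hin
  rcases hin with ⟨τ'', h0, heq⟩ | ⟨τ'', c, _, _, _, heq⟩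
  · have h0' : Trk M S 0 τ'' := h0
    obtain ⟨w, rfl⟩ := h0'.2
    have hw : sendProj ξ = w := by
      have := Sum.inl.inj heq
      rwa [sendProj_syncOf] at this
    rwa [hw]
  · exact absurd heq (by simp)

lemma projPeer_syncOf_cons (i a : ℕ) (w : List ℕ) :
    projPeer M i (syncOf (a :: w)) =
      ((if M.src a = i then [Act.send a] else []) ++
        (if M.dst a = i then [Act.recv a] else [])) ++ projPeer M i (syncOf w) := by
  rw [syncOf_cons, projPeer_cons, projPeer_cons]
  show (if M.src a = i then _ else _) = _
  by_cases h1 : M.src a = i <;> by_cases h2 : M.dst a = i <;>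
    simp [h1, h2, peerOf]

lemma projPeer_syncOf_append (i : ℕ) (u v : List ℕ) :
    projPeer M i (syncOf (u ++ v)) =
      projPeer M i (syncOf u) ++ projPeer M i (syncOf v) := by
  rw [syncOf_append, projPeer_append]

/-- projection of a pure-send block. -/
lemma projPeer_map_send (i : ℕ) (l : List ℕ) :
    projPeer M i (List.map Act.send l) =
      List.map Act.send (l.filter (fun a => decide (M.src a = i))) := by
  induction l with
  | nil => rfl
  | cons a l ih =>
    rw [List.map_cons, projPeer_cons, List.filter_cons]
    by_cases h : M.src a = i
    · rw [if_pos (show peerOf M (Act.send a) = i from h), ih]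
      simp [h]
    · rw [if_neg (show ¬ peerOf M (Act.send a) = i from h), ih]
      simp [h]

/-- The projection of a synchronous block on a peer that only sends in it. -/
lemma projPeer_syncOf_sends (d : ℕ) (v : List ℕ)
    (h : ∀ b ∈ v, M.src b = d ∧ M.dst b ≠ d) :
    projPeer M d (syncOf v) = List.map Act.send v := by
  induction v with
  | nil => rfl
  | cons a v ih =>
    rw [projPeer_syncOf_cons, if_pos (h a List.mem_cons_self).1,
      if_neg (h a List.mem_cons_self).2,
      ih (fun b hb => h b (List.mem_cons_of_mem a hb))]
    rfl

lemma projPeer_syncOf_single_src (z : ℕ) (hz : M.dst z ≠ M.src z) :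
    projPeer M (M.src z) (syncOf [z]) = [Act.send z] := by
  rw [show syncOf [z] = [Act.send z, Act.recv z] from rfl]
  rw [projPeer_cons, projPeer_cons]
  simp [peerOf, hz, projPeer_nil]

lemma projPeer_syncOf_single_dst (z : ℕ) (hz : M.src z ≠ M.dst z) :
    projPeer M (M.dst z) (syncOf [z]) = [Act.recv z] := by
  rw [show syncOf [z] = [Act.send z, Act.recv z] from rfl]
  rw [projPeer_cons, projPeer_cons]
  simp [peerOf, hz, projPeer_nil]

lemma projPeer_syncOf_single_other (z i : ℕ) (h1 : M.src z ≠ i) (h2 : M.dst z ≠ i) :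
    projPeer M i (syncOf [z]) = [] := by
  rw [show syncOf [z] = [Act.send z, Act.recv z] from rfl]
  rw [projPeer_cons, projPeer_cons]
  simp [peerOf, h1, h2, projPeer_nil]

lemma projPeer_send_cons (i z : ℕ) (σ : Trace) :
    projPeer M i (Act.send z :: σ) =
      (if M.src z = i then [Act.send z] else []) ++ projPeer M i σ := by
  rw [projPeer_cons]
  by_cases h : M.src z = i <;> simp [peerOf, h]

/-- traces of a system use only messages of `M` (via well-formedness). -/
lemma msgs_of_exec (hS : S.WF M) {σ : Trace} {c c' : Config} (he : Exec M S c σ c') :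
    ∀ α ∈ σ, α.msg ∈ M.msgs := by
  induction he with
  | refl => simp
  | @step c c' c'' α σ hstep hexec ih =>
    intro β hβ
    rcases List.mem_cons.mp hβ with rfl | hβ'
    · cases β with
      | send a => exact (hS _ _ _ _ hstep.1).2
      | recv a => exact (hS _ _ _ _ hstep.1).2
    · exact ih β hβ'

lemma msgs_of_traceOf (hS : S.WF M) {σ : Trace} (ht : TraceOf M S σ) :
    ∀ α ∈ σ, α.msg ∈ M.msgs := by
  obtain ⟨c, he⟩ := ht
  exact msgs_of_exec hS he

end Aux4

/-- Lemma 4.7: any sequence of sends of a 1-synchronizable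
system can be completed into a synchronous trace. -/
theorem sends_synchronizable (M : MessageSet) (S : System)
    (hM : M.WF) (hS : S.WF M) (hfin : S.FiniteDelta)
    (hsync : kSync M S 1)
    (τ : Trace) (hτ : Trk M S 0 τ)
    (l : List ℕ) (hmem : ∀ a ∈ l, a ∈ M.msgs)
    (h : Trk M S l.length (τ ++ l.map Act.send)) :
    Trk M S 0 (τ ++ syncOf l) := by
  have hτ' : TraceOf M S τ ∧ Synchronous τ := hτ
  obtain ⟨hτt, w₀, rfl⟩ := hτ'
  have hbig : TraceOf M S (syncOf w₀ ++ l.map Act.send) := trk_traceOf h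
  have hsd : ∀ a ∈ l, M.src a ≠ M.dst a := fun a ha => (hM.2 a (hmem a ha)).1
  -- main induction
  have main : ∀ r, r ≤ l.length →
      TraceOf M S (syncOf (w₀ ++ l.take r)) ∧
      (∀ i, PPath S i (S.init i)
        (projPeer M i (syncOf (w₀ ++ l.take r)) ++
          List.map Act.send ((l.drop r).filter (fun a => decide (M.src a = i))))) := by
    intro r
    induction r with
    | zero =>
      intro _
      constructor
      · simpa using hτt
      · intro i
        have hp := paths_of_traceOf hbig i
        rw [projPeer_append, projPeer_map_send] at hp
        simpa using hp
    | succ r ih =>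
      intro hr1
      have hrlt : r < l.length := hr1
      obtain ⟨hB, hG⟩ := ih (Nat.le_of_succ_le hr1)
      set z := l[r]'hrlt with hzdef
      have hzl : z ∈ l := List.getElem_mem hrlt
      have hzsd : M.src z ≠ M.dst z := hsd z hzl
      have htake : l.take (r + 1) = l.take r ++ [z] := by
        rw [List.take_succ, List.getElem?_eq_getElem hrlt]
        rfl
      have hdrop : l.drop r = z :: l.drop (r + 1) := List.drop_eq_getElem_cons hrlt
      -- (a) the 1-bounded trace  syncOf (w₀ ++ take r) · !z
      have hΞ₁trace : TraceOf M S (syncOf (w₀ ++ l.take r) ++ [Act.send z]) := by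
        apply traceOf_of_paths (boundedFifo_of_shape _ _ (tail1_ok z)).1
        intro i
        rw [projPeer_append]
        by_cases hi : M.src z = i
        · have hproj : projPeer M i [Act.send z] = [Act.send z] := by
            rw [show ([Act.send z] : Trace) = Act.send z :: [] from rfl, projPeer_send_cons,
              if_pos hi, projPeer_nil, List.append_nil]
          rw [hproj]
          have hGi := hG i
          rw [hdrop, List.filter_cons, if_pos (by simpa using hi)] at hGi
          rw [List.map_cons] at hGi
          have : projPeer M i (syncOf (w₀ ++ l.take r)) ++
              Act.send z :: List.map Act.send ((l.drop (r+1)).filter (fun a => decide (M.src a = i))) =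
              (projPeer M i (syncOf (w₀ ++ l.take r)) ++ [Act.send z]) ++
              List.map Act.send ((l.drop (r+1)).filter (fun a => decide (M.src a = i))) := by
            simp
          rw [this] at hGi
          exact hGi.prefix
        · have hproj : projPeer M i [Act.send z] = [] := by
            rw [show ([Act.send z] : Trace) = Act.send z :: [] from rfl, projPeer_send_cons,
              if_neg hi, projPeer_nil, List.append_nil]
          rw [hproj, List.append_nil]
          exact paths_of_traceOf hB i
      have hΞ₁ : Trk M S 1 (syncOf (w₀ ++ l.take r) ++ [Act.send z]) :=
        ⟨hΞ₁trace, boundedFifo_of_shape _ _ (tail1_ok z)⟩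
      have hB' : TraceOf M S (syncOf (w₀ ++ l.take (r+1))) := by
        have := (sync_of_tr1 hsync hΞ₁).1
        rw [sendProj_append, sendProj_syncOf] at this
        rw [show sendProj [Act.send z] = [z] from rfl] at this
        rwa [htake, ← List.append_assoc]
      -- (b) inner induction for the receiver d := M.dst z
      set cs := (l.drop (r+1)).filter (fun a => decide (M.src a = M.dst z)) with hcsdef
      have hcs_mem : ∀ b ∈ cs, M.src b = M.dst z ∧ b ∈ l := by
        intro b hb
        have h1 := List.mem_filter.mp hb
        exact ⟨by simpa using h1.2, List.mem_of_mem_drop h1.1⟩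
      have hcs_chan : ∀ b ∈ cs, ¬(M.src b = M.src z ∧ M.dst b = M.dst z) := by
        rintro b hb ⟨hb1, _⟩
        exact hzsd (hb1 ▸ (hcs_mem b hb).1)
      have hcs_sd : ∀ b ∈ cs, M.src b = M.dst z ∧ M.dst b ≠ M.dst z := by
        intro b hb
        obtain ⟨h1, h2⟩ := hcs_mem b hb
        exact ⟨h1, fun hh => hsd b h2 (by rw [h1, hh])⟩
      have inner : ∀ t, t ≤ cs.length →
          TraceOf M S (syncOf ((w₀ ++ l.take (r+1)) ++ cs.take t)) := by
        intro t
        induction t with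
        | zero => intro _; simpa using hB'
        | succ t iht =>
          intro ht1
          have htlt : t < cs.length := ht1
          have hin := iht (Nat.le_of_succ_le ht1)
          set c := cs[t]'htlt with hcdef
          have hccs : c ∈ cs := List.getElem_mem htlt
          have hcsrc : M.src c = M.dst z := (hcs_mem c hccs).1
          have hcdst : M.dst c ≠ M.dst z := (hcs_sd c hccs).2
          have hctake : cs.take (t+1) = cs.take t ++ [c] := by
            rw [List.take_succ, List.getElem?_eq_getElem htlt]
            rfl
          have hsubt : ∀ b ∈ cs.take t, b ∈ cs := fun b hb => List.mem_of_mem_take hb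
          -- the 1-bounded trace Ξ₂
          have hbd₂ : BoundedFifo M 1
              (syncOf (w₀ ++ l.take r) ++ (Act.send z :: (syncOf (cs.take t) ++ [Act.send c]))) :=
            boundedFifo_of_shape _ _
              (tail2_ok z c (cs.take t) (fun b hb => hcs_chan b (hsubt b hb))
                (hcs_chan c hccs))
          have hΞ₂trace : TraceOf M S
              (syncOf (w₀ ++ l.take r) ++ (Act.send z :: (syncOf (cs.take t) ++ [Act.send c]))) := by
            apply traceOf_of_paths hbd₂.1
            intro i
            rw [projPeer_append, projPeer_send_cons, projPeer_append]
            by_cases hid : i = M.dst z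
            · subst hid
              rw [if_neg hzsd]
              rw [projPeer_syncOf_sends _ _ (fun b hb => hcs_sd b (hsubt b hb))]
              have hpc : projPeer M (M.dst z) [Act.send c] = [Act.send c] := by
                rw [show ([Act.send c] : Trace) = Act.send c :: [] from rfl, projPeer_send_cons,
                  if_pos hcsrc, projPeer_nil, List.append_nil]
              rw [hpc, List.nil_append]
              have hGd := hG (M.dst z)
              rw [hdrop, List.filter_cons,
                if_neg (by simpa using (fun hh => hzsd hh : ¬ M.src z = M.dst z))] at hGd
              refine hGd.of_prefix ?_
              rw [← hcsdef]
              have : List.map Act.send (cs.take t) ++ [Act.send c] =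
                  List.map Act.send (cs.take (t+1)) := by
                rw [hctake]; simp
              rw [← List.append_assoc, List.append_assoc, this]
              exact (List.prefix_append_right_inj _).mpr
                (List.IsPrefix.map Act.send (List.take_prefix (t+1) cs))
            · have hpc : projPeer M i [Act.send c] = [] := by
                rw [show ([Act.send c] : Trace) = Act.send c :: [] from rfl, projPeer_send_cons,
                  if_neg (by intro hh; exact hid (hh.symm.trans hcsrc)), projPeer_nil,
                  List.append_nil]
              have hpath := paths_of_traceOf hin i
              rw [syncOf_append, projPeer_append, htake, ← List.append_assoc,
                syncOf_append, projPeer_append] at hpath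
              have hsingle : projPeer M i (syncOf [z]) =
                  if M.src z = i then [Act.send z] else [] := by
                by_cases his : M.src z = i
                · rw [if_pos his, ← his]
                  exact projPeer_syncOf_single_src z (fun hh => hzsd hh.symm)
                · rw [if_neg his]
                  exact projPeer_syncOf_single_other z i his (fun hh => hid hh.symm)
              rw [hsingle] at hpath
              rw [hpc, List.append_nil]
              simpa [List.append_assoc] using hpath
          have hΞ₂ : Trk M S 1
              (syncOf (w₀ ++ l.take r) ++ (Act.send z :: (syncOf (cs.take t) ++ [Act.send c]))) :=
            ⟨hΞ₂trace, hbd₂⟩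
          have := (sync_of_tr1 hsync hΞ₂).1
          have hsp : sendProj
              (syncOf (w₀ ++ l.take r) ++ (Act.send z :: (syncOf (cs.take t) ++ [Act.send c]))) =
              (w₀ ++ l.take (r+1)) ++ cs.take (t+1) := by
            rw [show (Act.send z :: (syncOf (cs.take t) ++ [Act.send c]) : Trace) =
              [Act.send z] ++ (syncOf (cs.take t) ++ [Act.send c]) from rfl]
            rw [sendProj_append, sendProj_append, sendProj_append, sendProj_syncOf,
              sendProj_syncOf]
            rw [show sendProj [Act.send z] = [z] from rfl,
              show sendProj [Act.send c] = [c] from rfl, htake, hctake]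
            simp
          rwa [hsp] at this
      have hinner_full : TraceOf M S (syncOf ((w₀ ++ l.take (r+1)) ++ cs)) := by
        have := inner cs.length (le_refl _)
        rwa [List.take_length] at this
      -- assemble B(r+1) ∧ G(r+1)
      refine ⟨hB', ?_⟩
      intro i
      by_cases hid : i = M.dst z
      · subst hid
        have hpath := paths_of_traceOf hinner_full (M.dst z)
        rw [syncOf_append, projPeer_append, projPeer_syncOf_sends _ _ hcs_sd] at hpath
        have hfilter : (l.drop (r+1)).filter (fun a => decide (M.src a = M.dst z)) = cs := rfl
        rw [hfilter]
        exact hpath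
      · by_cases his : i = M.src z
        · subst his
          have hGi := hG (M.src z)
          rw [hdrop, List.filter_cons, if_pos (by simp)] at hGi
          rw [htake, ← List.append_assoc, projPeer_syncOf_append,
            projPeer_syncOf_single_src z (fun hh => hid hh.symm)]
          rw [List.map_cons] at hGi
          simpa [List.append_assoc] using hGi
        · have hGi := hG i
          rw [hdrop, List.filter_cons,
            if_neg (by simpa using (fun hh => his hh.symm : ¬ M.src z = i))] at hGi
          rw [htake, ← List.append_assoc, projPeer_syncOf_append,
            projPeer_syncOf_single_other z i (fun hh => his hh.symm) (fun hh => hid hh.symm)]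
          simpa using hGi
  -- conclude
  have hfin' := (main l.length (le_refl _)).1
  rw [List.take_length] at hfin'
  constructor
  · rw [← syncOf_append]
    exact hfin'
  · exact ⟨w₀ ++ l, (syncOf_append w₀ l).symm⟩
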